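/- Let α be the real root of λ³ - λ² - λ - 1 = 0. Then (α+1)/α³ + 1/α³ < 1; consequently every complex root of Q(λ) = λ² + ((α+1)/α³)·λ + 1/α³ has modulus strictly less than 1. -/

import Mathlib

/-!
The Tribonacci constant satisfies `α > 1`, and `α³ = α² + α + 1` turns the claimed inequality
into `1 < α²`. For the roots: if `z² + b z + c = 0` with `‖b‖ + ‖c‖ < 1` and `‖z‖ ≥ 1`, then
`‖z‖² = ‖b z + c‖ ≤ (‖b‖ + ‖c‖) ‖z‖ < ‖z‖ ≤ ‖z‖²`, a contradiction.
-/

theorem norm_lt_one_of_sq_add_mul_add_eq_zero {𝕜 : Type*} [NormedField 𝕜] {b c z : 𝕜}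
    (hbc : ‖b‖ + ‖c‖ < 1) (hz : z ^ 2 + b * z + c = 0) : ‖z‖ < 1 := by
  by_contra! h
  have hsq : ‖z‖ ^ 2 ≤ ‖b‖ * ‖z‖ + ‖c‖ := by
    calc ‖z‖ ^ 2 = ‖b * z + c‖ := by
          rw [← norm_pow, ← norm_neg (b * z + c)]
          congr 1
          linear_combination hz
      _ ≤ ‖b‖ * ‖z‖ + ‖c‖ := (norm_add_le _ _).trans_eq (by rw [norm_mul])
  nlinarith [norm_nonneg b, norm_nonneg c]

theorem one_lt_of_pow_three_eq {α : ℝ} (hα : α ^ 3 - α ^ 2 - α - 1 = 0) : 1 < α := by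
  nlinarith [sq_nonneg (α - 1), sq_nonneg (α + 1)]

theorem add_one_div_pow_three_add_one_div_pow_three_lt_one {α : ℝ}
    (hα : α ^ 3 - α ^ 2 - α - 1 = 0) : (α + 1) / α ^ 3 + 1 / α ^ 3 < 1 := by
  have hα1 := one_lt_of_pow_three_eq hα
  rw [← add_div, div_lt_one (by positivity)]
  nlinarith

theorem stmt17 (α : ℝ) (hα : α ^ 3 - α ^ 2 - α - 1 = 0) :
    (α + 1) / α ^ 3 + 1 / α ^ 3 < 1 ∧
    ∀ z : ℂ, z ^ 2 + (((α + 1 : ℝ) : ℂ) / (α : ℂ) ^ 3) * z + 1 / (α : ℂ) ^ 3 = 0 →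
      ‖z‖ < 1 := by
  have hsum := add_one_div_pow_three_add_one_div_pow_three_lt_one hα
  refine ⟨hsum, fun z hz => norm_lt_one_of_sq_add_mul_add_eq_zero ?_ hz⟩
  have hα0 : 0 < α := zero_lt_one.trans (one_lt_of_pow_three_eq hα)
  have hb : ‖((α + 1 : ℝ) : ℂ) / (α : ℂ) ^ 3‖ = (α + 1) / α ^ 3 := by
    rw [← Complex.ofReal_pow, ← Complex.ofReal_div, Complex.norm_real, Real.norm_of_nonneg]
    positivity
  have hc : ‖1 / (α : ℂ) ^ 3‖ = 1 / α ^ 3 := by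
    rw [← Complex.ofReal_pow, ← Complex.ofReal_one, ← Complex.ofReal_div, Complex.norm_real,
      Real.norm_of_nonneg]
    positivity
  rwa [hb, hc]
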